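/- arXiv:1302.0522 — 2 statements merged into one kernel-verified Lean document; each statement's English description precedes it below -/
import Mathlib

section
/- Fix a positive integer j, a finite index set I_c = {1,…,n_c}, and for each t ∈ I_c a real polynomial A^{(t)}(x) = 1 + ∑_{u=r_t}^{s_t} A_u^{(t)} x^u with nonnegative coefficients A_u^{(t)} ≥ 0 and r_t ≥ 2, together with constants γ_t ≥ 0. Let (n_t(m))_{m∈ℕ} be natural-number sequences with n_t(m)/m → γ_t as m → ∞ (e.g. n_t(m) = γ_t·m along a suitable subsequence). Then lim_{m→∞} Coef[∏_{t∈I_c} (A^{(t)}(x))^{n_t(m)}, x^{2j}] / m^j = (1/j!)·(∑_{t : r_t = 2} γ_t A_2^{(t)})^j, where Coef[f(x), x^i] denotes the coefficient of x^i in the polynomial f(x). Equivalently, writing E = m/∫ρ, γ_t = ρ_t/(s_t∫ρ) and C = 2∑_{t : r_t = 2} ρ_t A_2^{(t)}/s_t, the coefficient of x^{2j} in ∏_t (A^{(t)}(x))^{γ_t m} converges to (EC/2)^j/j! as m → ∞. -/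
/-
Write `A_t = 1 + B_t` with `X ^ 2 ∣ B_t`. Then
`[x^{2k}] A_t ^ n = ∑_{l ≤ k} C(n, l) [x^{2k}] B_t ^ l`, and when `n ~ γ_t m` only the top
term `l = k` survives division by `m ^ k`, leaving `(γ_t A_2^{(t)}) ^ k / k!`. So after
`x ↦ x / √m` each factor `A_t ^ {n_t(m)}` tends coefficientwise to `exp (γ_t A_2^{(t)} x²)`,
and such limits multiply like exponentials: in the Cauchy product the even–even terms form the
binomial convolution of `c^p/p!` and `d^q/q!`, while the odd–odd terms are `O(m^{k-1})`.
-/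

open Filter Polynomial Asymptotics Finset

open scoped Nat

theorem coeff_pow_eq_zero_of_X_sq_dvd {R : Type*} [CommSemiring R] {B : R[X]}
    (hB : X ^ 2 ∣ B) {i k : ℕ} (hk : k < 2 * i) :
    (B ^ i).coeff k = 0 := by
  obtain ⟨C, rfl⟩ := hB
  rw [mul_pow, ← pow_mul, coeff_X_pow_mul', if_neg (by omega)]

theorem coeff_pow_two_mul_of_X_sq_dvd {R : Type*} [CommSemiring R] {B : R[X]}
    (hB : X ^ 2 ∣ B) (i : ℕ) :
    (B ^ i).coeff (2 * i) = B.coeff 2 ^ i := by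
  obtain ⟨C, rfl⟩ := hB
  rw [mul_pow, ← pow_mul, coeff_X_pow_mul', if_pos le_rfl, Nat.sub_self, coeff_X_pow_mul',
    if_pos le_rfl, Nat.sub_self, coeff_zero_eq_eval_zero, coeff_zero_eq_eval_zero, eval_pow]

theorem coeff_pow_eq_sum_choose {R : Type*} [CommRing R] {A : R[X]} (hA : X ^ 2 ∣ A - 1)
    (n k : ℕ) :
    (A ^ n).coeff k = ∑ l ∈ range (k / 2 + 1), ((A - 1) ^ l).coeff k * n.choose l := by
  have hterm : ∀ l, n < l ∨ k / 2 < l → ((A - 1) ^ l).coeff k * n.choose l = 0 := by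
    rintro l (hl | hl)
    · rw [Nat.choose_eq_zero_of_lt hl, Nat.cast_zero, mul_zero]
    · rw [coeff_pow_eq_zero_of_X_sq_dvd hA (by omega), zero_mul]
  have hexp : (A ^ n).coeff k
      = ∑ l ∈ range (n + 1), ((A - 1) ^ l).coeff k * n.choose l := by
    conv_lhs => rw [← sub_add_cancel A 1, add_pow, finsetSum_coeff]
    refine sum_congr rfl fun l _ => ?_
    rw [one_pow, mul_one, coeff_mul_natCast]
  rw [hexp, sum_subset (range_subset_range.2 (le_max_left (n + 1) (k / 2 + 1))),
    sum_subset (range_subset_range.2 (le_max_right (n + 1) (k / 2 + 1)))]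
  all_goals
    intro l hl hl'
    simp only [mem_range, not_lt] at hl hl'
    exact hterm l (by omega)

theorem add_pow_div_factorial {K : Type*} [Field K] [CharZero K] (c d : K) (k : ℕ) :
    (c + d) ^ k / k ! = ∑ y ∈ antidiagonal k, c ^ y.1 / y.1 ! * (d ^ y.2 / y.2 !) := by
  rw [(Commute.all c d).add_pow', sum_div]
  refine sum_congr rfl fun y hy => ?_
  rw [← HasAntidiagonal.mem_antidiagonal.mp hy, nsmul_eq_mul, Nat.cast_add_choose]
  have : ((y.1 + y.2)! : K) ≠ 0 := Nat.cast_ne_zero.2 (Nat.factorial_ne_zero _)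
  field_simp

theorem isBigO_natCast_pow_of_le {a b : ℕ} (h : a ≤ b) :
    (fun m : ℕ => (m : ℝ) ^ a) =O[atTop] fun m : ℕ => (m : ℝ) ^ b :=
  (isBigO_pow_pow_cobounded_of_le h).comp_tendsto tendsto_natCast_atTop_cobounded

theorem Asymptotics.IsBigO.tendsto_div_natCast_pow {f : ℕ → ℝ} {a b : ℕ}
    (h : f =O[atTop] fun m : ℕ => (m : ℝ) ^ a) (hab : a < b) :
    Tendsto (fun m => f m / (m : ℝ) ^ b) atTop (nhds 0) :=
  (h.mul (isBigO_refl (fun m : ℕ => ((m : ℝ) ^ b)⁻¹) atTop)).trans_tendsto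
    ((tendsto_pow_div_pow_atTop_zero hab).comp tendsto_natCast_atTop_atTop)

section LinearGrowth

variable {n : ℕ → ℕ} {γ : ℝ}

theorem isBigO_natCast_of_tendsto_div
    (hn : Tendsto (fun m : ℕ => (n m : ℝ) / m) atTop (nhds γ)) :
    (fun m => (n m : ℝ)) =O[atTop] fun m : ℕ => (m : ℝ) :=
  isBigO_of_div_tendsto_nhds
    ((eventually_ne_atTop 0).mono fun _ hm h => absurd (Nat.cast_eq_zero.1 h) hm) γ hn

theorem isBigO_choose_of_tendsto_div
    (hn : Tendsto (fun m : ℕ => (n m : ℝ) / m) atTop (nhds γ)) (i : ℕ) :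
    (fun m => ((n m).choose i : ℝ)) =O[atTop] fun m : ℕ => (m : ℝ) ^ i :=
  (isBigO_of_le atTop fun m => by
      simpa only [Real.norm_natCast, norm_pow, Nat.cast_pow] using
        (Nat.cast_le (α := ℝ)).2 (Nat.choose_le_pow (n m) i)).trans
    ((isBigO_natCast_of_tendsto_div hn).pow i)

theorem tendsto_descPochhammer_eval_div_of_tendsto_div
    (hn : Tendsto (fun m : ℕ => (n m : ℝ) / m) atTop (nhds γ)) (k : ℕ) :
    Tendsto (fun m => (descPochhammer ℝ k).eval (n m : ℝ) / (m : ℝ) ^ k) atTop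
      (nhds (γ ^ k)) := by
  induction k with
  | zero => simp
  | succ k ih =>
    have hk : Tendsto (fun m : ℕ => ((n m : ℝ) - k) / m) atTop (nhds γ) := by
      simpa only [sub_div, sub_zero] using hn.sub (tendsto_const_div_atTop_nhds_zero_nat (k : ℝ))
    rw [pow_succ]
    refine (ih.mul hk).congr fun m => ?_
    rw [descPochhammer_succ_eval, pow_succ, mul_div_mul_comm]

theorem tendsto_choose_div_pow_of_tendsto_div
    (hn : Tendsto (fun m : ℕ => (n m : ℝ) / m) atTop (nhds γ)) (k : ℕ) :
    Tendsto (fun m => ((n m).choose k : ℝ) / (m : ℝ) ^ k) atTop (nhds (γ ^ k / k !)) := by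
  refine ((tendsto_descPochhammer_eval_div_of_tendsto_div hn k).div_const (k ! : ℝ)).congr
    fun m => ?_
  rw [descPochhammer_eval_eq_descFactorial, Nat.descFactorial_eq_factorial_mul_choose,
    Nat.cast_mul]
  field_simp

end LinearGrowth

/-- Coefficientwise, `P m (x / √m) → exp (c x²)` as `m → ∞`. The odd coefficients do not
appear in the limit, but their `O`-bound is what makes the property stable under products. -/
structure CoeffAsymptotics (P : ℕ → ℝ[X]) (c : ℝ) : Prop where
  isBigO : ∀ i, (fun m => (P m).coeff i) =O[atTop] fun m : ℕ => (m : ℝ) ^ (i / 2)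
  tendsto : ∀ k, Tendsto (fun m => (P m).coeff (2 * k) / (m : ℝ) ^ k) atTop (nhds (c ^ k / k !))

namespace CoeffAsymptotics

theorem one : CoeffAsymptotics (fun _ => 1) 0 where
  isBigO i := (isBigO_const_one ℝ _ atTop).trans (by
    simpa only [pow_zero] using isBigO_natCast_pow_of_le (Nat.zero_le (i / 2)))
  tendsto k := by rcases k with _ | k <;> simp [coeff_one]

theorem pow {A : ℝ[X]} (hA : X ^ 2 ∣ A - 1) {n : ℕ → ℕ} {γ : ℝ}
    (hn : Tendsto (fun m : ℕ => (n m : ℝ) / m) atTop (nhds γ)) :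
    CoeffAsymptotics (fun m => A ^ n m) (γ * A.coeff 2) where
  isBigO i := by
    simp only [coeff_pow_eq_sum_choose hA]
    refine IsBigO.fun_sum fun l hl => ?_
    exact ((isBigO_choose_of_tendsto_div hn l).const_mul_left _).trans
      (isBigO_natCast_pow_of_le (Nat.lt_succ_iff.1 (mem_range.1 hl)))
  tendsto k := by
    have hsplit : ∀ m, (A ^ n m).coeff (2 * k) / (m : ℝ) ^ k
        = ∑ l ∈ range k, ((A - 1) ^ l).coeff (2 * k) * (n m).choose l / (m : ℝ) ^ k
          + (n m).choose k / (m : ℝ) ^ k * A.coeff 2 ^ k := by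
      intro m
      rw [coeff_pow_eq_sum_choose hA, Nat.mul_div_cancel_left k two_pos, sum_div,
        sum_range_succ, coeff_pow_two_mul_of_X_sq_dvd hA]
      simp [coeff_one, div_mul_eq_mul_div, mul_comm]
    have hlow : Tendsto (fun m => ∑ l ∈ range k,
        ((A - 1) ^ l).coeff (2 * k) * (n m).choose l / (m : ℝ) ^ k) atTop (nhds 0) := by
      rw [← sum_const_zero (s := range k)]
      refine tendsto_finsetSum _ fun l hl => ?_
      exact ((isBigO_choose_of_tendsto_div hn l).const_mul_left _).tendsto_div_natCast_pow
        (mem_range.1 hl)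
    have := hlow.add ((tendsto_choose_div_pow_of_tendsto_div hn k).mul_const (A.coeff 2 ^ k))
    rwa [zero_add, ← mul_div_right_comm, ← mul_pow, ← funext hsplit] at this

theorem mul {P Q : ℕ → ℝ[X]} {c d : ℝ} (hP : CoeffAsymptotics P c)
    (hQ : CoeffAsymptotics Q d) :
    CoeffAsymptotics (fun m => P m * Q m) (c + d) where
  isBigO i := by
    simp only [coeff_mul]
    refine IsBigO.fun_sum fun x hx => ((hP.isBigO x.1).mul (hQ.isBigO x.2)).trans ?_
    simp only [← pow_add]
    exact isBigO_natCast_pow_of_le (by rw [HasAntidiagonal.mem_antidiagonal] at hx; omega)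
  tendsto k := by
    have hsplit : ∀ m, (P m * Q m).coeff (2 * k) / (m : ℝ) ^ k
        = ∑ y ∈ antidiagonal k,
            (P m).coeff (2 * y.1) / (m : ℝ) ^ y.1 * ((Q m).coeff (2 * y.2) / (m : ℝ) ^ y.2)
          + ∑ x ∈ antidiagonal (2 * k) with ¬Even x.1,
            (P m).coeff x.1 * (Q m).coeff x.2 / (m : ℝ) ^ k := by
      intro m
      rw [coeff_mul, sum_div, ← sum_filter_add_sum_filter_not _ (fun x => Even x.1)]
      congr 1
      refine sum_nbij' (fun x => (x.1 / 2, x.2 / 2)) (fun y => (2 * y.1, 2 * y.2))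
        ?_ ?_ ?_ ?_ ?_ <;>
        simp only [mem_filter, HasAntidiagonal.mem_antidiagonal, Nat.even_iff,
          Prod.forall, Prod.mk.injEq]
      rotate_right
      · rintro a b ⟨hab, ha⟩
        rw [div_mul_div_comm, ← pow_add, show 2 * (a / 2) = a by omega,
          show 2 * (b / 2) = b by omega, show a / 2 + b / 2 = k by omega]
      all_goals omega
    have heven : Tendsto (fun m => ∑ y ∈ antidiagonal k,
        (P m).coeff (2 * y.1) / (m : ℝ) ^ y.1 * ((Q m).coeff (2 * y.2) / (m : ℝ) ^ y.2)) atTop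
        (nhds ((c + d) ^ k / k !)) := by
      rw [add_pow_div_factorial]
      exact tendsto_finsetSum _ fun y _ => (hP.tendsto y.1).mul (hQ.tendsto y.2)
    have hodd : Tendsto (fun m => ∑ x ∈ antidiagonal (2 * k) with ¬Even x.1,
        (P m).coeff x.1 * (Q m).coeff x.2 / (m : ℝ) ^ k) atTop (nhds 0) := by
      rw [← sum_const_zero (s := (antidiagonal (2 * k)).filter fun x => ¬Even x.1)]
      refine tendsto_finsetSum _ fun x hx => ?_
      simp only [mem_filter, HasAntidiagonal.mem_antidiagonal, Nat.even_iff] at hx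
      refine IsBigO.tendsto_div_natCast_pow (a := x.1 / 2 + x.2 / 2) ?_ (by omega)
      simpa only [← pow_add] using (hP.isBigO x.1).mul (hQ.isBigO x.2)
    have := heven.add hodd
    rwa [add_zero, ← funext hsplit] at this

theorem prod {ι : Type*} (s : Finset ι) {P : ι → ℕ → ℝ[X]} {c : ι → ℝ}
    (h : ∀ t ∈ s, CoeffAsymptotics (P t) (c t)) :
    CoeffAsymptotics (fun m => ∏ t ∈ s, P t m) (∑ t ∈ s, c t) := by
  classical
  induction s using Finset.induction_on with
  | empty => simpa only [prod_empty, sum_empty] using one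
  | insert a s ha ih =>
    simp only [prod_insert ha, sum_insert ha]
    exact (h a (mem_insert_self a s)).mul (ih fun t ht => h t (mem_insert_of_mem ht))

end CoeffAsymptotics

theorem stmt_1_general (j nc : ℕ)
    (A : Fin nc → Polynomial ℝ) (r : Fin nc → ℕ) (γ : Fin nc → ℝ)
    (hA0 : ∀ t, (A t).coeff 0 = 1)
    (hr : ∀ t, 2 ≤ r t)
    (hgap : ∀ t u, 0 < u → u < r t → (A t).coeff u = 0)
    (n : Fin nc → ℕ → ℕ)
    (hn : ∀ t, Tendsto (fun m : ℕ => (n t m : ℝ) / (m : ℝ)) atTop (nhds (γ t))) :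
    Tendsto (fun m : ℕ => (∏ t : Fin nc, A t ^ n t m).coeff (2 * j) / (m : ℝ) ^ j)
      atTop
      (nhds ((∑ t ∈ Finset.univ.filter (fun t : Fin nc => r t = 2),
          γ t * (A t).coeff 2) ^ j / (Nat.factorial j : ℝ))) := by
  have hdvd : ∀ t, X ^ 2 ∣ A t - 1 := fun t => X_pow_dvd_iff.2 fun d hd => by
    interval_cases d
    · simp [hA0]
    · simp [coeff_one, hgap t 1 one_pos (one_lt_two.trans_le (hr t))]
  have hsum : ∑ t with r t = 2, γ t * (A t).coeff 2 = ∑ t, γ t * (A t).coeff 2 :=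
    sum_filter_of_ne fun t _ hne => by
      contrapose! hne
      rw [hgap t 2 two_pos (lt_of_le_of_ne (hr t) hne.symm), mul_zero]
  rw [hsum]
  exact (CoeffAsymptotics.prod univ fun t _ => CoeffAsymptotics.pow (hdvd t) (hn t)).tendsto j

/-- Coefficient asymptotics: let `A^{(t)}(x) = 1 + ∑_{u = r_t}^{s_t} A_u^{(t)} x^u` be real
polynomials with nonnegative coefficients, `r_t ≥ 2`, and let `n_t(m)` be natural-number
sequences with `n_t(m)/m → γ_t ≥ 0`. Then
`Coef[∏_t (A^{(t)}(x))^{n_t(m)}, x^{2j}] / m^j → (1/j!) (∑_{t : r_t = 2} γ_t A_2^{(t)})^j`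
as `m → ∞`. (For types with `r_t > 2` the coefficient of `x^2` vanishes, so restricting
the sum to `{t : r_t = 2}` is as stated.) -/
theorem stmt_1 (j nc : ℕ) (hj : 0 < j)
    (A : Fin nc → Polynomial ℝ) (r s : Fin nc → ℕ) (γ : Fin nc → ℝ)
    (hA0 : ∀ t, (A t).coeff 0 = 1)
    (hAnn : ∀ t u, 0 ≤ (A t).coeff u)
    (hr : ∀ t, 2 ≤ r t)
    (hrs : ∀ t, r t ≤ s t)
    (hdeg : ∀ t, (A t).natDegree ≤ s t)
    (hgap : ∀ t u, 0 < u → u < r t → (A t).coeff u = 0)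
    (hγ : ∀ t, 0 ≤ γ t)
    (n : Fin nc → ℕ → ℕ)
    (hn : ∀ t, Tendsto (fun m : ℕ => (n t m : ℝ) / (m : ℝ)) atTop (nhds (γ t))) :
    Tendsto (fun m : ℕ => (∏ t : Fin nc, A t ^ n t m).coeff (2 * j) / (m : ℝ) ^ j)
      atTop
      (nhds ((∑ t ∈ Finset.univ.filter (fun t : Fin nc => r t = 2),
          γ t * (A t).coeff 2) ^ j / (Nat.factorial j : ℝ))) :=
  stmt_1_general j nc A r γ hA0 hr hgap n hn
end

section
/- In Ensemble 1 with block length N and vertical stacking parameter q ≥ 2, let A_d denote the number of vectors of Hamming weight d in the kernel of the block-diagonal matrix H_1 over GF(2). Then the expected number M(d) of weight-d codewords of a code drawn uniformly at random from the ensemble (i.e., with the q−1 column permutations Π_2,…,Π_q independent and uniform) equals M(d) = A_d^q / binom(N,d)^{q−1}. -/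
/-!
Let permutations act on vectors by `c ↦ c ∘ σ`; over `ZMod 2` the orbits are exactly the weight
classes. For `c` in the weight class `O` and any property `K`, double counting the pairs `(σ, c')`
with `c' ∈ O` and `K (c' ∘ σ)` gives `#{σ | K (c ∘ σ)} · #O = #{w ∈ O | K w} · N!`, whatever `c` is.
Because the `q - 1` permutations are independent, the total count over all `ω` is
`∑_{c ∈ O, K c} #{σ | K (c ∘ σ)} ^ (q - 1) = A_d · (A_d · N! / C(N, d)) ^ (q - 1)`, and dividing by
`(N!) ^ (q - 1)` gives `A_d ^ q / C(N, d) ^ (q - 1)`.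
-/

open Finset

lemma card_filter_forall_apply {ι β : Type*} [Fintype ι] [DecidableEq ι] [Fintype β]
    (p : β → Prop) [DecidablePred p] :
    #{ω : ι → β | ∀ i, p (ω i)} = #{b | p b} ^ Fintype.card ι := by
  have : ({ω : ι → β | ∀ i, p (ω i)} : Finset _) = Fintype.piFinset fun _ => {b | p b} := by
    ext ω
    simp [Fintype.mem_piFinset]
  simp [this]

namespace MulAction

variable {G X : Type*} [Group G] [Fintype G] [MulAction G X] {O : Finset X}
  (P : X → Prop) [DecidablePred P]

lemma card_filter_smul_smul (h : G) (c : X) :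
    #{g : G | P (g • h • c)} = #{g : G | P (g • c)} :=
  card_equiv (Equiv.mulRight h) (by simp [mul_smul])

omit [Fintype G] in
lemma card_filter_smul_of_smul_mem (hO : ∀ g : G, ∀ c ∈ O, g • c ∈ O) (g : G) :
    #{c ∈ O | P (g • c)} = #{c ∈ O | P c} := by
  refine card_nbij' (g • ·) (g⁻¹ • ·) ?_ ?_ ?_ ?_ <;> intro c hc <;> simp_all

lemma card_filter_smul_mul_card
    (hO : ∀ c ∈ O, ∀ w, w ∈ O ↔ ∃ g : G, g • c = w) {c : X} (hc : c ∈ O) :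
    #{g : G | P (g • c)} * #O = #{w ∈ O | P w} * Fintype.card G := by
  have hinv : ∀ g : G, ∀ c ∈ O, g • c ∈ O := fun g c hc => (hO c hc _).2 ⟨g, rfl⟩
  have hconst : ∀ c' ∈ O, #{g : G | P (g • c')} = #{g : G | P (g • c)} := by
    intro c' hc'
    obtain ⟨h, rfl⟩ := (hO c hc c').1 hc'
    exact card_filter_smul_smul P h c
  have hdouble := sum_card_bipartiteAbove_eq_sum_card_bipartiteBelow
    (s := O) (t := (univ : Finset G)) (r := fun c' g => P (g • c'))
  simp only [bipartiteAbove, bipartiteBelow] at hdouble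
  rw [sum_congr rfl hconst, sum_congr rfl fun g _ => card_filter_smul_of_smul_mem P hinv g]
    at hdouble
  simpa [mul_comm] using hdouble

lemma sum_card_filter_forall_smul_mul_card_pow
    (hO : ∀ c ∈ O, ∀ w, w ∈ O ↔ ∃ g : G, g • c = w) (n : ℕ) :
    (∑ ω : Fin n → G, #{c ∈ O | P c ∧ ∀ ℓ, P (ω ℓ • c)}) * #O ^ n
      = #{c ∈ O | P c} ^ (n + 1) * Fintype.card G ^ n := by
  have hdouble := sum_card_bipartiteAbove_eq_sum_card_bipartiteBelow
    (s := (univ : Finset (Fin n → G))) (t := {c ∈ O | P c})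
    (r := fun ω c => ∀ ℓ, P (ω ℓ • c))
  simp only [bipartiteAbove, bipartiteBelow, filter_filter] at hdouble
  calc (∑ ω : Fin n → G, #{c ∈ O | P c ∧ ∀ ℓ, P (ω ℓ • c)}) * #O ^ n
      = ∑ c ∈ O with P c, (#{g : G | P (g • c)} * #O) ^ n := by
        rw [hdouble, sum_mul]
        refine sum_congr rfl fun c _ => ?_
        rw [mul_pow]
        congr 1
        convert card_filter_forall_apply (ι := Fin n) (fun g : G => P (g • c)) using 3
        rw [Fintype.card_fin]
    _ = ∑ c ∈ O with P c, (#{c ∈ O | P c} * Fintype.card G) ^ n :=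
        sum_congr rfl fun c hc => by rw [card_filter_smul_mul_card P hO (mem_filter.1 hc).1]
    _ = #{c ∈ O | P c} ^ (n + 1) * Fintype.card G ^ n := by
        rw [sum_const, smul_eq_mul]; ring

lemma average_card_filter_forall_smul
    (hO : ∀ c ∈ O, ∀ w, w ∈ O ↔ ∃ g : G, g • c = w) (n : ℕ) :
    (∑ ω : Fin n → G, (#{c ∈ O | P c ∧ ∀ ℓ, P (ω ℓ • c)} : ℝ)) / Fintype.card (Fin n → G)
      = (#{c ∈ O | P c} : ℝ) ^ (n + 1) / (#O : ℝ) ^ n := by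
  rcases O.eq_empty_or_nonempty with rfl | hne
  · simp
  rw [div_eq_div_iff (by positivity) (by simp [hne.ne_empty]), Fintype.card_pi_const]
  exact_mod_cast sum_card_filter_forall_smul_mul_card_pow P hO n

end MulAction

lemma ZMod.eq_of_ne_zero_iff {a b : ZMod 2} (h : a ≠ 0 ↔ b ≠ 0) : a = b := by
  revert a b; decide

instance {M : Type*} [Fintype M] : Fintype Mᵈᵐᵃ := Fintype.ofEquiv M DomMulAct.mk

variable {α : Type*} [Fintype α]

lemma hammingNorm_comp_perm {β : Type*} [Zero β] [DecidableEq β] (v : α → β) (σ : Equiv.Perm α) :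
    hammingNorm (v ∘ σ) = hammingNorm v :=
  card_equiv σ (by simp)

lemma exists_perm_comp_eq_of_hammingNorm_eq [DecidableEq α] {v w : α → ZMod 2}
    (h : hammingNorm v = hammingNorm w) : ∃ σ : Equiv.Perm α, v ∘ σ = w := by
  obtain ⟨σ, hσ⟩ := Equiv.Perm.exists_map_finset_eq {x | w x ≠ 0} {x | v x ≠ 0} h.symm
  refine ⟨σ, funext fun x => ZMod.eq_of_ne_zero_iff ?_⟩
  simpa using (congrArg (σ x ∈ ·) hσ).symm

lemma card_filter_hammingNorm_eq [DecidableEq α] (d : ℕ) :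
    #{v : α → ZMod 2 | hammingNorm v = d} = (Fintype.card α).choose d := by
  rw [← card_univ, ← card_powersetCard]
  refine card_nbij' (fun v => ({x | v x ≠ 0} : Finset α)) (fun t x => if x ∈ t then 1 else 0)
    ?_ ?_ ?_ ?_
  · intro v hv; simpa [mem_powersetCard, hammingNorm] using hv
  · intro t ht; simp_all [mem_powersetCard, hammingNorm]
  · intro v _; funext x; exact ZMod.eq_of_ne_zero_iff (by simp)
  · intro t _; ext x; simp

lemma mem_filter_hammingNorm_eq_iff_exists_smul [DecidableEq α] {d : ℕ} {c : α → ZMod 2}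
    (hc : c ∈ ({v | hammingNorm v = d} : Finset _)) (w : α → ZMod 2) :
    w ∈ ({v | hammingNorm v = d} : Finset _) ↔ ∃ g : (Equiv.Perm α)ᵈᵐᵃ, g • c = w := by
  simp only [mem_filter, mem_univ, true_and] at hc ⊢
  constructor
  · intro hw
    obtain ⟨σ, hσ⟩ := exists_perm_comp_eq_of_hammingNorm_eq (hc.trans hw.symm)
    exact ⟨DomMulAct.mk σ, hσ⟩
  · rintro ⟨g, rfl⟩
    exact (hammingNorm_comp_perm c (DomMulAct.mk.symm g)).trans hc

lemma average_card_filter_forall_comp_perm [DecidableEq α] (n : ℕ)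
    (K : (α → ZMod 2) → Prop) [DecidablePred K] (d : ℕ) :
    (∑ ω : Fin n → Equiv.Perm α,
        (#{c | hammingNorm c = d ∧ K c ∧ ∀ ℓ, K (fun x => c (ω ℓ x))} : ℝ))
        / Fintype.card (Fin n → Equiv.Perm α)
      = (#{v | K v ∧ hammingNorm v = d} : ℝ) ^ (n + 1) / ((Fintype.card α).choose d : ℝ) ^ n := by
  have h := MulAction.average_card_filter_forall_smul (G := (Equiv.Perm α)ᵈᵐᵃ) K
    (fun _ hc => mem_filter_hammingNorm_eq_iff_exists_smul (d := d) hc) n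
  rw [card_filter_hammingNorm_eq] at h
  simp only [filter_filter] at h
  convert h using 3
  · exact Fintype.sum_equiv (Equiv.piCongrRight fun _ => DomMulAct.mk) _ _ fun _ => rfl
  · exact Fintype.card_congr (Equiv.piCongrRight fun _ => DomMulAct.mk)
  · simp only [and_comm]

/-- In Ensemble 1 with block-diagonal matrix `H₁` (diagonal blocks `H̄_1, …, H̄_B`,
`N` columns) and stacking parameter `q ≥ 2`, the expected number `M(d)` of weight-`d`
codewords — the average, over the `q−1` independent uniform column permutations
`Π_2, …, Π_q`, of the number of weight-`d` vectors in the kernel of the stacked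
matrix — equals `A_d^q / C(N,d)^{q−1}`, where `A_d` is the number of weight-`d`
vectors in the kernel of `H₁`. -/
theorem stmt_4 (q B : ℕ) (hq : 2 ≤ q) (s mr : Fin B → ℕ)
    (Hbar : ∀ i : Fin B, Matrix (Fin (mr i)) (Fin (s i)) (ZMod 2)) (d : ℕ) :
    (∑ ω : Fin (q - 1) → Equiv.Perm (Σ i : Fin B, Fin (s i)),
        ((Finset.univ.filter (fun c : (Σ i : Fin B, Fin (s i)) → ZMod 2 =>
            hammingNorm c = d ∧
            Matrix.mulVec (Matrix.blockDiagonal' Hbar) c = 0 ∧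
            ∀ ℓ : Fin (q - 1),
              Matrix.mulVec (Matrix.blockDiagonal' Hbar) (fun x => c (ω ℓ x)) = 0)).card : ℝ))
        / (Fintype.card (Fin (q - 1) → Equiv.Perm (Σ i : Fin B, Fin (s i))) : ℝ)
      = ((Finset.univ.filter (fun v : (Σ i : Fin B, Fin (s i)) → ZMod 2 =>
            Matrix.mulVec (Matrix.blockDiagonal' Hbar) v = 0 ∧ hammingNorm v = d)).card : ℝ) ^ q
          / (Nat.choose (Fintype.card (Σ i : Fin B, Fin (s i))) d : ℝ) ^ (q - 1) := by
  have h := average_card_filter_forall_comp_perm (q - 1)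
    (fun v => Matrix.mulVec (Matrix.blockDiagonal' Hbar) v = 0) d
  rwa [Nat.sub_add_cancel (by omega)] at h
end
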